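/- arXiv:2508.07883 — 2 statements merged into one kernel-verified Lean document; each statement's English description precedes it below -/
import Mathlib

section
/- Let B be a left brace with B³ = 0. Then for all integers m, n and all a, c ∈ B: (m·a) ∗ (n·c) = nm·(a ∗ c) − (nm(m−1)/2)·((a ∗ a) ∗ c), where m·a, n·c denote additive multiples. -/
/-!
Fix `a` and `c`. Under `B³ = 0` multiplying by a star value is the same as adding it, so the map
`x ↦ x ∗ c` is additive up to the correction term `(u ∗ v) ∗ c`, and `x ↦ (x ∗ a) ∗ c` is additive. A function `f` with
`f (x + a) = f x + f a - g x` for an additive `g` satisfies `f (m • a) = m • f a - C(m,2) • g a`,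
which together with the additivity of `a ∗ -` in its second argument gives the formula.
-/

/-- A left brace: an abelian group `(B,+)` and a group `(B,·)` on the same set,
with common identity (`0 = 1`), satisfying `a·(b+c) = a·b − a + a·c`. -/
class LeftBrace (B : Type*) extends AddCommGroup B, Group B where
  zero_eq_one : (0 : B) = 1
  brace_distrib : ∀ a b c : B, a * (b + c) = a * b - a + a * c

/-- The star operation `a ∗ b = a·b − a − b`. -/
def bstar {B : Type*} [LeftBrace B] (a b : B) : B := a * b - a - b

theorem map_zsmul_eq_sub_of_map_add {G H : Type*} [AddCommGroup G] [AddCommGroup H] {f : G → H}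
    {a : G} (g : G →+ H) (hf : ∀ x, f (x + a) = f x + f a - g x) (m : ℤ) :
    f (m • a) = m • f a - (m * (m - 1) / 2) • g a := by
  have hf0 : f 0 = 0 := by simpa using hf 0
  induction m using Int.induction_on with
  | zero => simp [hf0]
  | succ i ih =>
    have hcoeff : (i + 1 : ℤ) * (i + 1 - 1) / 2 = i * (i - 1) / 2 + i := by
      rw [show (i + 1 : ℤ) * (i + 1 - 1) = i * (i - 1) + i * 2 by ring,
        Int.add_mul_ediv_right _ _ two_ne_zero]
    rw [add_zsmul, one_zsmul, hf, ih, map_zsmul, hcoeff]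
    module
  | pred i ih =>
    have hcoeff : (-i - 1 : ℤ) * (-i - 1 - 1) / 2 = -i * (-i - 1) / 2 - (-i - 1) := by
      rw [show (-i - 1 : ℤ) * (-i - 1 - 1) = -i * (-i - 1) + (-(-i - 1)) * 2 by ring,
        Int.add_mul_ediv_right _ _ two_ne_zero, ← sub_eq_add_neg]
    have hshift : (-i - 1 : ℤ) • a + a = (-i : ℤ) • a := by module
    have hstep := hf ((-i - 1 : ℤ) • a)
    rw [hshift, ih, map_zsmul] at hstep
    rw [hcoeff]
    linear_combination (norm := module) -hstep

namespace LeftBrace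

variable {B : Type*} [LeftBrace B]

theorem bstar_add (a b c : B) : bstar a (b + c) = bstar a b + bstar a c := by
  simp only [bstar, brace_distrib]
  abel

def bstarAddHom (a : B) : B →+ B := AddMonoidHom.mk' (bstar a) (bstar_add a)

theorem bstar_zsmul (a : B) (n : ℤ) (c : B) : bstar a (n • c) = n • bstar a c :=
  map_zsmul (bstarAddHom a) n c

theorem mul_bstar (u v c : B) :
    bstar (u * v) c = bstar u (bstar v c) + bstar u c + bstar v c := by
  have hsub : bstar u (bstar v c) = bstar u (v * c) - bstar u v - bstar u c := by
    change bstarAddHom u (v * c - v - c) = _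
    rw [map_sub, map_sub]
    rfl
  rw [hsub]
  simp only [bstar, mul_assoc]
  abel

section CubeZero

variable (hB3 : ∀ a b c : B, bstar a (bstar b c) = 0)
include hB3

theorem mul_bstar_eq_add (x p q : B) : x * bstar p q = x + bstar p q := by
  have h : x * bstar p q - x - bstar p q = 0 := hB3 x p q
  rwa [sub_sub, sub_eq_zero] at h

theorem add_bstar_bstar (x p q c : B) :
    bstar (x + bstar p q) c = bstar x c + bstar (bstar p q) c := by
  rw [← mul_bstar_eq_add hB3, mul_bstar, hB3, zero_add]

theorem add_bstar (u v c : B) : bstar (u + v) c = bstar u c + bstar v c - bstar (bstar u v) c := by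
  have h := mul_bstar u v c
  rw [show u * v = u + v + bstar u v by simp only [bstar]; abel, add_bstar_bstar hB3, hB3,
    zero_add] at h
  exact eq_sub_of_add_eq h

theorem bstar_bstar_bstar (p q b c : B) : bstar (bstar (bstar p q) b) c = 0 := by
  have h := add_bstar hB3 (bstar p q) b c
  rw [add_comm, add_bstar_bstar hB3, add_comm (bstar b c)] at h
  exact sub_eq_self.mp h.symm

theorem bstar_bstar_add (x y a c : B) :
    bstar (bstar (x + y) a) c = bstar (bstar x a) c + bstar (bstar y a) c := by
  have h : bstar (x + y) a + bstar (bstar x y) a = bstar x a + bstar y a := by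
    rw [add_bstar hB3]; abel
  rw [← add_bstar_bstar hB3 (bstar x a), ← h, add_bstar_bstar hB3, bstar_bstar_bstar hB3, add_zero]

theorem zsmul_bstar (m : ℤ) (a c : B) :
    bstar (m • a) c = m • bstar a c - (m * (m - 1) / 2) • bstar (bstar a a) c :=
  map_zsmul_eq_sub_of_map_add (f := fun x ↦ bstar x c)
    (AddMonoidHom.mk' (fun x ↦ bstar (bstar x a) c) (fun x y ↦ bstar_bstar_add hB3 x y a c))
    (fun x ↦ add_bstar hB3 x a c) m

end CubeZero

end LeftBrace

open LeftBrace in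
theorem stmt11 {B : Type*} [LeftBrace B]
    (hB3 : ∀ a b c : B, bstar a (bstar b c) = 0) (m n : ℤ) (a c : B) :
    bstar (m • a) (n • c)
      = (n * m) • bstar a c - ((n * m * (m - 1)) / 2) • bstar (bstar a a) c := by
  rw [bstar_zsmul, zsmul_bstar hB3, smul_sub, smul_smul, smul_smul, mul_assoc n m,
    Int.mul_ediv_assoc n (Int.even_mul_pred_self m).two_dvd]
end

section
/- Fix r ≥ 1 and let D be the free abelian group on symbols x_i (1≤i≤r), x_{ij} (1≤i,j≤r), x_{iij} (1≤i,j≤r), x_{ijk} (1≤i<j≤r, 1≤k≤r), with multiplication given by (d·e)_i = d_i+e_i; (d·e)_{ij} = d_{ij}+e_{ij}+d_i e_j; (d·e)_{iij} = d_{iij}+e_{iij}+(d_{ii}−d_i(d_i−1)/2)e_j; (d·e)_{ijk} = d_{ijk}+e_{ijk}+(d_{ij}−d_i d_j+d_{ji})e_k. Then (D,+,·) is a left brace: (D,·) is a group with identity 0, and d·(e+f) = d·e − d + d·f for all d,e,f ∈ D. -/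
/-- Index set: symbols `x_i`, `x_{ij}`, `x_{iij}`, and `x_{ijk}` for `i < j`. -/
inductive Idx (r : ℕ) : Type where
  | one : Fin r → Idx r
  | two : Fin r → Fin r → Idx r
  | dup : Fin r → Fin r → Idx r
  | three : (i j : Fin r) → i < j → Fin r → Idx r

/-- Since `Idx r` is finite, all integer-valued functions on it are finitely
supported, so `Idx r → ℤ` is the free abelian group on `Idx r` (pointwise `+`). -/
def dmul {r : ℕ} (d e : Idx r → ℤ) : Idx r → ℤ
  | .one i => d (.one i) + e (.one i)
  | .two i j => d (.two i j) + e (.two i j) + d (.one i) * e (.one j)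
  | .dup i j => d (.dup i j) + e (.dup i j)
      + (d (.two i i) - d (.one i) * (d (.one i) - 1) / 2) * e (.one j)
  | .three i j h k => d (.three i j h k) + e (.three i j h k)
      + (d (.two i j) - d (.one i) * d (.one j) + d (.two j i)) * e (.one k)

lemma T2 (a : ℤ) : 2 * (a * (a - 1) / 2) = a * (a - 1) := by
  apply Int.mul_ediv_cancel'
  rcases Int.even_or_odd a with ⟨x, hx⟩ | ⟨x, hx⟩
  · exact ⟨x * (a - 1), by rw [hx]; ring⟩
  · exact ⟨a * x, by rw [hx]; ring⟩

lemma Tadd (a b : ℤ) :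
    (a + b) * (a + b - 1) / 2 = a * (a - 1) / 2 + b * (b - 1) / 2 + a * b := by
  have h1 := T2 a; have h2 := T2 b; have h3 := T2 (a + b)
  have h4 : (a + b) * (a + b - 1) = a * (a - 1) + b * (b - 1) + 2 * (a * b) := by ring
  omega

lemma Tneg (a : ℤ) : (-a) * (-a - 1) / 2 = a * (a - 1) / 2 + a := by
  have h1 := T2 a; have h2 := T2 (-a)
  have h3 : (-a) * (-a - 1) = a * (a - 1) + 2 * a := by ring
  omega

theorem stmt17 {r : ℕ} (hr : 1 ≤ r) :
    (∀ d e f : Idx r → ℤ, dmul (dmul d e) f = dmul d (dmul e f))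
    ∧ (∀ d : Idx r → ℤ, dmul 0 d = d)
    ∧ (∀ d : Idx r → ℤ, dmul d 0 = d)
    ∧ (∀ d : Idx r → ℤ, ∃ e : Idx r → ℤ, dmul d e = 0 ∧ dmul e d = 0)
    ∧ (∀ d e f : Idx r → ℤ, dmul d (e + f) = dmul d e - d + dmul d f) := by
  refine ⟨?_, ?_, ?_, ?_, ?_⟩
  · intro d e f
    funext x
    cases x with
    | one i => simp only [dmul]; ring
    | two i j => simp only [dmul]; ring
    | dup i j =>
      simp only [dmul]
      rw [Tadd]
      ring
    | three i j h k => simp only [dmul]; ring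
  · intro d
    funext x
    cases x <;> simp [dmul]
  · intro d
    funext x
    cases x <;> simp [dmul]
  · intro d
    refine ⟨fun x => match x with
      | .one i => -d (.one i)
      | .two i j => -d (.two i j) + d (.one i) * d (.one j)
      | .dup i j => -d (.dup i j)
          + (d (.two i i) - d (.one i) * (d (.one i) - 1) / 2) * d (.one j)
      | .three i j h k => -d (.three i j h k)
          + (d (.two i j) - d (.one i) * d (.one j) + d (.two j i)) * d (.one k),
      ?_, ?_⟩
    · funext x
      cases x with
      | one i => simp [dmul]
      | two i j => simp only [dmul, Pi.zero_apply]; ring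
      | dup i j => simp only [dmul, Pi.zero_apply]; ring
      | three i j h k => simp only [dmul, Pi.zero_apply]; ring
    · funext x
      cases x with
      | one i => simp [dmul]
      | two i j => simp only [dmul, Pi.zero_apply]; ring
      | dup i j =>
        simp only [dmul, Pi.zero_apply]
        rw [Tneg]
        linear_combination (-d (Idx.one j)) * T2 (d (Idx.one i))
      | three i j h k => simp only [dmul, Pi.zero_apply]; ring
  · intro d e f
    funext x
    cases x <;> simp only [dmul, Pi.add_apply, Pi.sub_apply] <;> ring
end
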